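/- arXiv:math-ph/0103027 — 2 statements merged into one kernel-verified Lean document; each statement's English description precedes it below -/
import Mathlib

section
/- Fix β ∈ ℝ \ {0} and κ > max(−2/β, 1). With Γ_a as below, there exist a constant C > 0 and a₀ > 0 such that Γ_a is invertible and the operator norm (with respect to the Euclidean norm on ℝ³) satisfies ‖(Γ_a)^{−1}‖ ≤ C·a^{−2} for all a ∈ (0, a₀). -/
open Matrix

/-- `u(a) = 2βκa/(2a − β)`. -/
noncomputable def uFun (β κ a : ℝ) : ℝ := 2 * β * κ * a / (2 * a - β)

/-- `v(a) = 2κa²/β`. -/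
noncomputable def vFun (β κ a : ℝ) : ℝ := 2 * κ * a ^ 2 / β

/-- `w(a) = e^{−κa}`. -/
noncomputable def wFun (κ a : ℝ) : ℝ := Real.exp (-κ * a)

/-- The matrix `Γ_a(iκ)` from Krein's formula for the triple-δ Hamiltonian. -/
noncomputable def Gam (β κ a : ℝ) : Matrix (Fin 3) (Fin 3) ℝ :=
  (1 / (2 * κ)) •
    !![1 + uFun β κ a, wFun κ a, (wFun κ a) ^ 2;
       wFun κ a, 1 + vFun β κ a, wFun κ a;
       (wFun κ a) ^ 2, wFun κ a, 1 + uFun β κ a]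

/-- The operator norm of a real 3×3 matrix acting on Euclidean `ℝ³`. -/
noncomputable def euclOpNorm (A : Matrix (Fin 3) (Fin 3) ℝ) : ℝ :=
  ‖LinearMap.toContinuousLinearMap (Matrix.toEuclideanLin A)‖

open Real Filter Set Finset

/-! ### Auxiliary definitions -/

noncomputable def Dfun (β κ a : ℝ) : ℝ :=
  (1 + uFun β κ a)^2 * (1 + vFun β κ a) - 2 * (1 + uFun β κ a) * (wFun κ a)^2
    + (1 - vFun β κ a) * (wFun κ a)^4

noncomputable def c11 (β κ a : ℝ) : ℝ := (1 + uFun β κ a) * (1 + vFun β κ a) - (wFun κ a)^2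
noncomputable def c12 (β κ a : ℝ) : ℝ := -(wFun κ a) * (1 + uFun β κ a - (wFun κ a)^2)
noncomputable def c13 (β κ a : ℝ) : ℝ := -(vFun β κ a) * (wFun κ a)^2
noncomputable def c22 (β κ a : ℝ) : ℝ := (1 + uFun β κ a)^2 - (wFun κ a)^4

noncomputable def InvM (β κ a : ℝ) : Matrix (Fin 3) (Fin 3) ℝ :=
  (2 * κ / Dfun β κ a) •
    !![c11 β κ a, c12 β κ a, c13 β κ a;
       c12 β κ a, c22 β κ a, c12 β κ a;
       c13 β κ a, c12 β κ a, c11 β κ a]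

noncomputable def Q2f (κ a : ℝ) : ℝ := 1 - 2*κ*a + 2*κ^2*a^2 - (4/3)*κ^3*a^3 + (2/3)*κ^4*a^4
noncomputable def Q4f (κ a : ℝ) : ℝ := 1 - 4*κ*a + 8*κ^2*a^2 - (32/3)*κ^3*a^3 + (32/3)*κ^4*a^4

noncomputable def Pf (β κ a : ℝ) : ℝ :=
  (8*β^2*κ^3 + 4*β^3*κ^4)
  + a*(32*κ^2 + 32*β*κ^3 - (16/3)*β^2*κ^4 + (8/3)*β^3*κ^5)
  + a^2*(-64*κ^3 - 48*β*κ^4 - (80/3)*β^2*κ^5)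
  + a^3*((256/3)*κ^4 + (256/3)*β*κ^5)
  + a^4*(-(256/3)*κ^5)

noncomputable def N11 (β κ a : ℝ) : ℝ :=
  2*β*κ + 2*β^2*κ^2 + a*(4*κ - (4/3)*β^2*κ^3) + a^2*((8/3)*β*κ^3 + (2/3)*β^2*κ^4)
    + a^3*(-(4/3)*β*κ^4)
noncomputable def N12 (β κ a : ℝ) : ℝ :=
  4*κ + 2*β*κ^2 + a*(-4*κ^2 - (4/3)*β*κ^3) + a^2*((8/3)*κ^3 + (2/3)*β*κ^4)
    + a^3*(-(4/3)*κ^4)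
noncomputable def N22 (β κ a : ℝ) : ℝ :=
  -8*β*κ - 4*β^2*κ^2 + a*(16*κ + 32*β*κ^2 + (32/3)*β^2*κ^3)
    + a^2*(-32*κ^2 - (128/3)*β*κ^3 - (32/3)*β^2*κ^4)
    + a^3*((128/3)*κ^3 + (128/3)*β*κ^4) + a^4*(-(128/3)*κ^4)

/-! ### Euclidean operator norm bounded by the sum of absolute values of the entries -/

lemma comp_le_norm (y : EuclideanSpace ℝ (Fin 3)) (i : Fin 3) : |y i| ≤ ‖y‖ := by
  rw [EuclideanSpace.norm_eq, ← Real.sqrt_sq_eq_abs]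
  apply Real.sqrt_le_sqrt
  have : |y i|^2 ≤ ∑ j, ‖y j‖^2 :=
    Finset.single_le_sum (f := fun j => ‖y j‖^2) (fun j _ => sq_nonneg _) (Finset.mem_univ i)
  simpa [Real.norm_eq_abs, sq_abs] using this

lemma norm_le_sum_comp (y : EuclideanSpace ℝ (Fin 3)) : ‖y‖ ≤ ∑ i, |y i| := by
  rw [EuclideanSpace.norm_eq]
  rw [show ∑ i, ‖y i‖^2 = ∑ i, |y i|^2 by simp [Real.norm_eq_abs]]
  have h : ∑ i, |y i|^2 ≤ (∑ i, |y i|)^2 := by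
    rw [Fin.sum_univ_three, Fin.sum_univ_three]
    nlinarith [abs_nonneg (y 0), abs_nonneg (y 1), abs_nonneg (y 2)]
  calc Real.sqrt (∑ i, |y i|^2) ≤ Real.sqrt ((∑ i, |y i|)^2) := Real.sqrt_le_sqrt h
    _ = ∑ i, |y i| := Real.sqrt_sq (by positivity)

lemma euclOpNorm_le_sum (A : Matrix (Fin 3) (Fin 3) ℝ) :
    euclOpNorm A ≤ ∑ i, ∑ j, |A i j| := by
  apply ContinuousLinearMap.opNorm_le_bound _ (by positivity)
  intro x
  have hcomp : ∀ i, (LinearMap.toContinuousLinearMap (Matrix.toEuclideanLin A) x) i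
      = ∑ j, A i j * x j := fun i => rfl
  calc ‖LinearMap.toContinuousLinearMap (Matrix.toEuclideanLin A) x‖
      ≤ ∑ i, |(LinearMap.toContinuousLinearMap (Matrix.toEuclideanLin A) x) i| :=
        norm_le_sum_comp _
    _ ≤ ∑ i, (∑ j, |A i j|) * ‖x‖ := by
        apply Finset.sum_le_sum
        intro i _
        rw [hcomp i]
        calc |∑ j, A i j * x j| ≤ ∑ j, |A i j * x j| := Finset.abs_sum_le_sum_abs _ _
          _ ≤ ∑ j, |A i j| * ‖x‖ := by
              apply Finset.sum_le_sum
              intro j _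
              rw [abs_mul]
              exact mul_le_mul_of_nonneg_left (comp_le_norm x j) (abs_nonneg _)
          _ = (∑ j, |A i j|) * ‖x‖ := by rw [Finset.sum_mul]
    _ = (∑ i, ∑ j, |A i j|) * ‖x‖ := by rw [Finset.sum_mul]

/-! ### Determinant and inverse formulas -/

lemma det_Gam (β κ a : ℝ) : (Gam β κ a).det = (1/(2*κ))^3 * Dfun β κ a := by
  simp [Gam, det_smul, Matrix.det_fin_three, Dfun]
  ring

set_option maxHeartbeats 2000000 in
lemma mul_inv_general (κ u v w D : ℝ) (hκ : κ ≠ 0) (hD : D ≠ 0)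
    (hDdef : D = (1+u)^2*(1+v) - 2*(1+u)*w^2 + (1-v)*w^4) :
    ((1/(2*κ)) • !![1+u, w, w^2; w, 1+v, w; w^2, w, 1+u]) *
      ((2*κ/D) • !![(1+u)*(1+v)-w^2, -w*(1+u-w^2), -v*w^2;
                    -w*(1+u-w^2), (1+u)^2-w^4, -w*(1+u-w^2);
                    -v*w^2, -w*(1+u-w^2), (1+u)*(1+v)-w^2]) = 1 := by
  ext i j
  fin_cases i <;> fin_cases j <;>
    · simp [Matrix.mul_apply, Fin.sum_univ_three]
      field_simp
      try rw [hDdef]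
      ring

lemma Gam_mul_InvM (β κ a : ℝ) (hκ : κ ≠ 0) (hD : Dfun β κ a ≠ 0) :
    Gam β κ a * InvM β κ a = 1 := by
  have := mul_inv_general κ (uFun β κ a) (vFun β κ a) (wFun κ a) (Dfun β κ a) hκ hD
    (by unfold Dfun; ring)
  unfold Gam InvM c11 c12 c13 c22
  exact this

/-! ### Taylor estimates for the exponential -/

lemma exp_taylor_bound {x : ℝ} (h : |x| ≤ 1) :
    |Real.exp x - (1 + x + x^2/2 + x^3/6 + x^4/24)| ≤ |x|^5 := by
  have hb := Real.exp_bound h (n := 5) (by norm_num)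
  have hs : ∑ m ∈ Finset.range 5, x ^ m / m.factorial
      = 1 + x + x^2/2 + x^3/6 + x^4/24 := by
    norm_num [Finset.sum_range_succ, Nat.factorial]
    try ring
  rw [hs] at hb
  calc |Real.exp x - (1 + x + x^2/2 + x^3/6 + x^4/24)| ≤ |x|^5 * (6/(120*5)) := by
        simpa [Nat.factorial] using hb
    _ ≤ |x|^5 := by nlinarith [pow_nonneg (abs_nonneg x) 5]

lemma w_sq (κ a : ℝ) : (wFun κ a)^2 = Real.exp (-(2*κ*a)) := by
  rw [wFun, ← Real.exp_nat_mul]; norm_num; ring_nf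

lemma w_four (κ a : ℝ) : (wFun κ a)^4 = Real.exp (-(4*κ*a)) := by
  rw [wFun, ← Real.exp_nat_mul]; norm_num; ring_nf

lemma delta2_bound {κ a : ℝ} (h : |2*κ*a| ≤ 1) :
    |(wFun κ a)^2 - Q2f κ a| ≤ |2*κ*a|^5 := by
  have := exp_taylor_bound (x := -(2*κ*a)) (by rwa [abs_neg])
  rw [← w_sq] at this
  rw [← abs_neg (2*κ*a)] at *
  convert this using 2
  unfold Q2f; ring

lemma delta4_bound {κ a : ℝ} (h : |4*κ*a| ≤ 1) :
    |(wFun κ a)^4 - Q4f κ a| ≤ |4*κ*a|^5 := by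
  have := exp_taylor_bound (x := -(4*κ*a)) (by rwa [abs_neg])
  rw [← w_four] at this
  rw [← abs_neg (4*κ*a)] at *
  convert this using 2
  unfold Q4f; ring

/-! ### Key rational-function identities -/

lemma Dfun_key (β κ a : ℝ) (ha : a ≠ 0) (hβ : β ≠ 0) (hs : 2*a - β ≠ 0) :
    Dfun β κ a / a^4 = Pf β κ a / (β*(2*a-β)^2)
      - 2*(1 + uFun β κ a) * (((wFun κ a)^2 - Q2f κ a)/a^4)
      + (1 - vFun β κ a) * (((wFun κ a)^4 - Q4f κ a)/a^4) := by
  unfold Dfun uFun vFun Q2f Q4f Pf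
  field_simp
  ring

lemma c11_key (β κ a : ℝ) (ha : a ≠ 0) (hβ : β ≠ 0) (hs : 2*a - β ≠ 0) :
    c11 β κ a / a^2
      = N11 β κ a / (β*(2*a-β)) - ((wFun κ a)^2 - Q2f κ a)/a^2 := by
  unfold c11 uFun vFun Q2f N11
  field_simp
  ring

lemma c12_key (β κ a : ℝ) (ha : a ≠ 0) (hs : 2*a - β ≠ 0) :
    c12 β κ a / a^2
      = -(wFun κ a) * (N12 β κ a / (2*a-β) - ((wFun κ a)^2 - Q2f κ a)/a^2) := by
  unfold c12 uFun Q2f N12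
  field_simp
  ring

lemma c13_key (β κ a : ℝ) (ha : a ≠ 0) (hβ : β ≠ 0) :
    c13 β κ a / a^2 = -(2*κ/β) * (wFun κ a)^2 := by
  unfold c13 vFun
  field_simp

lemma c22_key (β κ a : ℝ) (ha : a ≠ 0) (hs : 2*a - β ≠ 0) :
    c22 β κ a / a^2
      = N22 β κ a / ((2*a-β)^2) - ((wFun κ a)^4 - Q4f κ a)/a^2 := by
  unfold c22 uFun Q4f N22
  field_simp
  ring

set_option maxHeartbeats 4000000 in
theorem stmt9 (β κ : ℝ) (hβ : β ≠ 0) (hκ : κ > max (-2 / β) 1) :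
    ∃ C > (0 : ℝ), ∃ a₀ > (0 : ℝ), ∀ a : ℝ, 0 < a → a < a₀ →
      (Gam β κ a).det ≠ 0 ∧ euclOpNorm (Gam β κ a)⁻¹ ≤ C / a ^ 2 := by
  have hκ1 : (1:ℝ) < κ := lt_of_le_of_lt (le_max_right _ _) hκ
  have hκβ : -2/β < κ := lt_of_le_of_lt (le_max_left _ _) hκ
  have hκ0 : (0:ℝ) < κ := lt_trans one_pos hκ1
  have hκne : κ ≠ 0 := ne_of_gt hκ0
  have h2β : 0 < κ + 2/β := by
    have : -2/β = -(2/β) := by ring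
    rw [this] at hκβ
    linarith
  set c₀ : ℝ := 4*κ^4 + 8*κ^3/β with hc₀def
  have hc₀ : 0 < c₀ := by
    have h1 : c₀ = 4*κ^3 * (κ + 2/β) := by rw [hc₀def]; ring
    rw [h1]
    exact mul_pos (by positivity) h2β
  set l : Filter ℝ := nhdsWithin 0 (Set.Ioi 0) with hldef
  -- basic eventual facts
  have hapos : ∀ᶠ a in l, 0 < a := eventually_mem_nhdsWithin
  have hslin : Filter.Tendsto (fun a : ℝ => 2*a - β) l (nhds (-β)) :=
    (((by fun_prop : Continuous fun a : ℝ => 2*a - β).tendsto' 0 (-β)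
      (by ring))).mono_left nhdsWithin_le_nhds
  have hsne : ∀ᶠ a in l, 2*a - β ≠ 0 := hslin.eventually_ne (neg_ne_zero.mpr hβ)
  have hasmall : Set.Ioo (0:ℝ) (1/(4*κ)) ∈ l := by
    exact Ioo_mem_nhdsGT_of_mem ⟨le_refl 0, by positivity⟩
  -- tendsto of u, v, w
  have hu : Filter.Tendsto (fun a => uFun β κ a) l (nhds 0) := by
    have h1 : Filter.Tendsto (fun a : ℝ => 2*β*κ*a) (nhds 0) (nhds 0) :=
      (by fun_prop : Continuous fun a : ℝ => 2*β*κ*a).tendsto' 0 0 (by ring)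
    have h2 : Filter.Tendsto (fun a : ℝ => 2*a - β) (nhds 0) (nhds (-β)) :=
      (by fun_prop : Continuous fun a : ℝ => 2*a - β).tendsto' 0 (-β) (by ring)
    have := h1.div h2 (neg_ne_zero.mpr hβ)
    rw [zero_div] at this
    exact this.mono_left nhdsWithin_le_nhds
  have hv : Filter.Tendsto (fun a => vFun β κ a) l (nhds 0) := by
    have h1 : Filter.Tendsto (fun a : ℝ => 2*κ*a^2/β) (nhds 0) (nhds 0) :=
      (by fun_prop : Continuous fun a : ℝ => 2*κ*a^2/β).tendsto' 0 0
        (by simp)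
    simpa [vFun] using h1.mono_left nhdsWithin_le_nhds
  have hw : Filter.Tendsto (fun a => wFun κ a) l (nhds 1) := by
    have h1 : Filter.Tendsto (fun a : ℝ => Real.exp (-κ*a)) (nhds 0) (nhds 1) :=
      (by fun_prop : Continuous fun a : ℝ => Real.exp (-κ*a)).tendsto' 0 1
        (by simp)
    simpa [wFun] using h1.mono_left nhdsWithin_le_nhds
  have hw2 : Filter.Tendsto (fun a => (wFun κ a)^2) l (nhds 1) := by
    simpa using hw.pow 2
  -- delta tendsto
  have hd2 : Filter.Tendsto (fun a => ((wFun κ a)^2 - Q2f κ a)/a^4) l (nhds 0) := by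
    apply squeeze_zero_norm' (a := fun x => 32*κ^5*x)
    · filter_upwards [hasmall] with a ha
      have ha0 : 0 < a := ha.1
      have h4 : a * (4*κ) < 1 := (lt_div_iff₀ (by positivity)).mp ha.2
      have hb : |2*κ*a| ≤ 1 := by
        rw [abs_of_pos (by positivity)]
        nlinarith
      have := delta2_bound hb
      rw [abs_of_pos (by positivity : (0:ℝ) < 2*κ*a)] at this
      rw [Real.norm_eq_abs, abs_div, abs_of_pos (by positivity : (0:ℝ) < a^4)]
      rw [div_le_iff₀ (by positivity : (0:ℝ) < a^4)]
      nlinarith [this]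
    · exact (((by fun_prop : Continuous fun x : ℝ => 32*κ^5*x).tendsto' 0 0
        (by ring))).mono_left nhdsWithin_le_nhds
  have hd4 : Filter.Tendsto (fun a => ((wFun κ a)^4 - Q4f κ a)/a^4) l (nhds 0) := by
    apply squeeze_zero_norm' (a := fun x => 1024*κ^5*x)
    · filter_upwards [hasmall] with a ha
      have ha0 : 0 < a := ha.1
      have h4 : a * (4*κ) < 1 := (lt_div_iff₀ (by positivity)).mp ha.2
      have hb : |4*κ*a| ≤ 1 := by
        rw [abs_of_pos (by positivity)]
        nlinarith
      have := delta4_bound hb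
      rw [abs_of_pos (by positivity : (0:ℝ) < 4*κ*a)] at this
      rw [Real.norm_eq_abs, abs_div, abs_of_pos (by positivity : (0:ℝ) < a^4)]
      rw [div_le_iff₀ (by positivity : (0:ℝ) < a^4)]
      nlinarith [this]
    · exact (((by fun_prop : Continuous fun x : ℝ => 1024*κ^5*x).tendsto' 0 0
        (by ring))).mono_left nhdsWithin_le_nhds
  -- delta2/a^2, delta4/a^2 tendsto 0
  have hsq : Filter.Tendsto (fun a : ℝ => a^2) l (nhds 0) :=
    (((by fun_prop : Continuous fun x : ℝ => x^2).tendsto' 0 0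
      (by norm_num))).mono_left nhdsWithin_le_nhds
  have hd2' : Filter.Tendsto (fun a => ((wFun κ a)^2 - Q2f κ a)/a^2) l (nhds 0) := by
    have hev : (fun a => ((wFun κ a)^2 - Q2f κ a)/a^4 * a^2)
        =ᶠ[l] (fun a => ((wFun κ a)^2 - Q2f κ a)/a^2) := by
      filter_upwards [hapos] with a ha
      field_simp
    simpa using (hd2.mul hsq).congr' hev
  have hd4' : Filter.Tendsto (fun a => ((wFun κ a)^4 - Q4f κ a)/a^2) l (nhds 0) := by
    have hev : (fun a => ((wFun κ a)^4 - Q4f κ a)/a^4 * a^2)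
        =ᶠ[l] (fun a => ((wFun κ a)^4 - Q4f κ a)/a^2) := by
      filter_upwards [hapos] with a ha
      field_simp
    simpa using (hd4.mul hsq).congr' hev
  -- tendsto of the rational parts
  have hPf : Filter.Tendsto (fun a => Pf β κ a / (β*(2*a-β)^2)) l
      (nhds (Pf β κ 0 / (β*β^2))) := by
    have h1 : Filter.Tendsto (fun a => Pf β κ a) (nhds 0) (nhds (Pf β κ 0)) := by
      apply Continuous.tendsto
      unfold Pf
      fun_prop
    have h2 : Filter.Tendsto (fun a : ℝ => β*(2*a-β)^2) (nhds 0) (nhds (β*(2*0-β)^2)) :=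
      Continuous.tendsto (by fun_prop) 0
    have h3 : β*(2*(0:ℝ)-β)^2 ≠ 0 := by
      intro h
      apply hβ
      have : β^3 = 0 := by nlinarith [h]
      exact pow_eq_zero_iff (n := 3) (by norm_num) |>.mp this
    have := h1.div h2 h3
    have heq : β*(2*(0:ℝ)-β)^2 = β*β^2 := by ring
    rw [heq] at this
    exact this.mono_left nhdsWithin_le_nhds
  have hN11 : Filter.Tendsto (fun a => N11 β κ a / (β*(2*a-β))) l
      (nhds (N11 β κ 0 / (β*(-β)))) := by
    have h1 : Filter.Tendsto (fun a => N11 β κ a) (nhds 0) (nhds (N11 β κ 0)) := by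
      apply Continuous.tendsto; unfold N11; fun_prop
    have h2 : Filter.Tendsto (fun a : ℝ => β*(2*a-β)) (nhds 0) (nhds (β*(2*0-β))) :=
      Continuous.tendsto (by fun_prop) 0
    have h3 : β*(2*(0:ℝ)-β) ≠ 0 := by
      simp only [mul_zero, zero_sub]
      ring_nf
      intro h
      apply hβ
      nlinarith [h, sq_nonneg β]
    have := h1.div h2 h3
    have heq : β*(2*(0:ℝ)-β) = β*(-β) := by ring
    rw [heq] at this
    exact this.mono_left nhdsWithin_le_nhds
  have hN12 : Filter.Tendsto (fun a => N12 β κ a / (2*a-β)) l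
      (nhds (N12 β κ 0 / (-β))) := by
    have h1 : Filter.Tendsto (fun a => N12 β κ a) (nhds 0) (nhds (N12 β κ 0)) := by
      apply Continuous.tendsto; unfold N12; fun_prop
    have h2 : Filter.Tendsto (fun a : ℝ => 2*a-β) (nhds 0) (nhds (2*0-β)) :=
      Continuous.tendsto (by fun_prop) 0
    have h3 : 2*(0:ℝ)-β ≠ 0 := by simpa using neg_ne_zero.mpr hβ
    have := h1.div h2 h3
    have heq : 2*(0:ℝ)-β = -β := by ring
    rw [heq] at this
    exact this.mono_left nhdsWithin_le_nhds
  have hN22 : Filter.Tendsto (fun a => N22 β κ a / ((2*a-β)^2)) l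
      (nhds (N22 β κ 0 / (β^2))) := by
    have h1 : Filter.Tendsto (fun a => N22 β κ a) (nhds 0) (nhds (N22 β κ 0)) := by
      apply Continuous.tendsto; unfold N22; fun_prop
    have h2 : Filter.Tendsto (fun a : ℝ => (2*a-β)^2) (nhds 0) (nhds ((2*0-β)^2)) :=
      Continuous.tendsto (by fun_prop) 0
    have h3 : (2*(0:ℝ)-β)^2 ≠ 0 := by
      apply pow_ne_zero
      simpa using neg_ne_zero.mpr hβ
    have := h1.div h2 h3
    have heq : (2*(0:ℝ)-β)^2 = β^2 := by ring
    rw [heq] at this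
    exact this.mono_left nhdsWithin_le_nhds
  -- tendsto of D/a^4
  have hDlim : Filter.Tendsto (fun a => Dfun β κ a / a^4) l (nhds c₀) := by
    have hcomb : Filter.Tendsto (fun a => Pf β κ a / (β*(2*a-β)^2)
        - 2*(1 + uFun β κ a) * (((wFun κ a)^2 - Q2f κ a)/a^4)
        + (1 - vFun β κ a) * (((wFun κ a)^4 - Q4f κ a)/a^4)) l
        (nhds (Pf β κ 0 / (β*β^2) - 2*(1+0)*0 + (1-0)*0)) := by
      apply Filter.Tendsto.add
      apply Filter.Tendsto.sub hPf
      · have h1u : Filter.Tendsto (fun a => 2*(1 + uFun β κ a)) l (nhds (2*(1+0))) :=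
          (tendsto_const_nhds.add hu).const_mul 2
        exact h1u.mul hd2
      · exact ((tendsto_const_nhds.sub hv)).mul hd4
    have hval : Pf β κ 0 / (β*β^2) - 2*(1+0)*0 + ((1:ℝ)-0)*0 = c₀ := by
      unfold Pf
      rw [hc₀def]
      field_simp
      ring
    rw [hval] at hcomb
    apply hcomb.congr'
    filter_upwards [hapos, hsne] with a ha hs
    exact (Dfun_key β κ a (ne_of_gt ha) hβ hs).symm
  -- tendsto of cofactors / a^2
  have h11 : Filter.Tendsto (fun a => c11 β κ a / a^2) l
      (nhds (N11 β κ 0 / (β*(-β)) - 0)) := by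
    apply (hN11.sub hd2').congr'
    filter_upwards [hapos, hsne] with a ha hs
    exact (c11_key β κ a (ne_of_gt ha) hβ hs).symm
  have h12 : Filter.Tendsto (fun a => c12 β κ a / a^2) l
      (nhds (-1 * (N12 β κ 0 / (-β) - 0))) := by
    have : Filter.Tendsto (fun a => -(wFun κ a) * (N12 β κ a / (2*a-β)
        - ((wFun κ a)^2 - Q2f κ a)/a^2)) l (nhds (-1 * (N12 β κ 0 / (-β) - 0))) := by
      exact (hw.neg).mul (hN12.sub hd2')
    apply this.congr'
    filter_upwards [hapos, hsne] with a ha hs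
    exact (c12_key β κ a (ne_of_gt ha) hs).symm
  have h13 : Filter.Tendsto (fun a => c13 β κ a / a^2) l (nhds (-(2*κ/β) * 1)) := by
    have : Filter.Tendsto (fun a => -(2*κ/β) * (wFun κ a)^2) l (nhds (-(2*κ/β) * 1)) :=
      hw2.const_mul _
    apply this.congr'
    filter_upwards [hapos] with a ha
    exact (c13_key β κ a (ne_of_gt ha) hβ).symm
  have h22 : Filter.Tendsto (fun a => c22 β κ a / a^2) l
      (nhds (N22 β κ 0 / (β^2) - 0)) := by
    apply (hN22.sub hd4').congr'
    filter_upwards [hapos, hsne] with a ha hs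
    exact (c22_key β κ a (ne_of_gt ha) hs).symm
  -- the ratio function
  set L : ℝ := 2*κ*(2*|N11 β κ 0 / (β*(-β)) - 0| + 4*|(-1 * (N12 β κ 0 / (-β) - 0))|
      + 2*|(-(2*κ/β) * 1)| + |N22 β κ 0 / (β^2) - 0|) / c₀ with hLdef
  have hr : Filter.Tendsto (fun a => 2*κ*(2*|c11 β κ a / a^2| + 4*|c12 β κ a / a^2|
      + 2*|c13 β κ a / a^2| + |c22 β κ a / a^2|) / (Dfun β κ a / a^4)) l (nhds L) := by
    rw [hLdef]
    apply Filter.Tendsto.div _ hDlim (ne_of_gt hc₀)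
    apply Filter.Tendsto.const_mul
    exact (((h11.abs.const_mul 2).add (h12.abs.const_mul 4)).add
      (h13.abs.const_mul 2)).add h22.abs
  have hL0 : 0 ≤ L := by
    rw [hLdef]
    apply div_nonneg _ (le_of_lt hc₀)
    positivity
  -- collect eventual statements
  have hev1 : ∀ᶠ a in l, 2*κ*(2*|c11 β κ a / a^2| + 4*|c12 β κ a / a^2|
      + 2*|c13 β κ a / a^2| + |c22 β κ a / a^2|) / (Dfun β κ a / a^4) < L + 1 :=
    hr.eventually_lt_const (by linarith)
  have hev2 : ∀ᶠ a in l, c₀/2 < Dfun β κ a / a^4 :=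
    hDlim.eventually_const_lt (half_lt_self hc₀)
  have hev := (hev1.and hev2)
  rw [(nhdsGT_basis (0:ℝ)).eventually_iff] at hev
  obtain ⟨a₀, ha₀, hivl⟩ := hev
  refine ⟨L + 1, by linarith, a₀, ha₀, fun a ha1 ha2 => ?_⟩
  obtain ⟨hra, hDa⟩ := hivl ⟨ha1, ha2⟩
  have ha4 : (0:ℝ) < a^4 := by positivity
  have ha2' : (0:ℝ) < a^2 := by positivity
  have hD4pos : 0 < Dfun β κ a / a^4 := lt_trans (by positivity) hDa
  have hDpos : 0 < Dfun β κ a := by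
    have h := mul_pos hD4pos ha4
    rwa [div_mul_cancel₀ _ (ne_of_gt ha4)] at h
  have hDne : Dfun β κ a ≠ 0 := ne_of_gt hDpos
  constructor
  · rw [det_Gam]
    exact mul_ne_zero (by positivity) hDne
  · have hinv : (Gam β κ a)⁻¹ = InvM β κ a :=
      Matrix.inv_eq_right_inv (Gam_mul_InvM β κ a hκne hDne)
    rw [hinv]
    have hfrac : 0 < 2*κ/Dfun β κ a := by positivity
    have hsum : ∑ i, ∑ j, |InvM β κ a i j|
        = (2*κ/Dfun β κ a) * (2*|c11 β κ a| + 4*|c12 β κ a| + 2*|c13 β κ a| + |c22 β κ a|) := by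
      simp [InvM, Matrix.smul_apply, smul_eq_mul, Fin.sum_univ_three, abs_mul,
        abs_of_pos hfrac]
      ring
    have hb1 : euclOpNorm (InvM β κ a)
        ≤ (2*κ/Dfun β κ a) * (2*|c11 β κ a| + 4*|c12 β κ a| + 2*|c13 β κ a| + |c22 β κ a|) := by
      rw [← hsum]
      exact euclOpNorm_le_sum _
    have hid : (2*κ/Dfun β κ a) * (2*|c11 β κ a| + 4*|c12 β κ a| + 2*|c13 β κ a| + |c22 β κ a|)
        = 2*κ*(2*|c11 β κ a / a^2| + 4*|c12 β κ a / a^2|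
          + 2*|c13 β κ a / a^2| + |c22 β κ a / a^2|) / (Dfun β κ a / a^4) / a^2 := by
      rw [abs_div, abs_div, abs_div, abs_div, abs_of_pos ha2']
      field_simp
    calc euclOpNorm (InvM β κ a) ≤ _ := hb1
      _ = _ / a^2 := hid
      _ ≤ (L+1) / a^2 := (div_le_div_iff_of_pos_right ha2').mpr (le_of_lt hra)
end

section
/- Fix κ > 0, β ∈ ℝ \ {0}, and α ∈ ℝ with α ≠ 1. For a > 0 with 2a ≠ β let u(a) := 2βκa/(2a − β), v(a) := 2κa²/β, w(a) := e^{−κa}, and define the real 3×3 matrix Γ_{a,α} := (1/(2κ))·[[1 + αu, w, w²], [w, 1 + αv, w], [w², w, 1 + αu]]. Then there exists a₀ > 0 such that det Γ_{a,α} ≠ 0 for all a ∈ (0, a₀), i.e. Γ_{a,α} is invertible for sufficiently small a. -/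
open Matrix

/-- The matrix `Γ_{a,α}(iκ)` for the disbalanced (α-scaled) triple-δ family. -/
noncomputable def GamA (β κ α a : ℝ) : Matrix (Fin 3) (Fin 3) ℝ :=
  (1 / (2 * κ)) •
    !![1 + α * uFun β κ a, wFun κ a, (wFun κ a) ^ 2;
       wFun κ a, 1 + α * vFun β κ a, wFun κ a;
       (wFun κ a) ^ 2, wFun κ a, 1 + α * uFun β κ a]

noncomputable def pF (β κ α a : ℝ) : ℝ := 2 * α * β * κ / (2 * a - β)

noncomputable def sF (κ a : ℝ) (n : ℕ) : ℝ := (1 - wFun κ a ^ n) / a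

noncomputable def GF (β κ α a : ℝ) : ℝ :=
  2 * pF β κ α a * sF κ a 2 + (pF β κ α a) ^ 2
    + 2 * pF β κ α a * (2 * α * κ / β * a)
    + (pF β κ α a) ^ 2 * (2 * α * κ / β * a ^ 2)
    + (2 * α * κ / β * a) * sF κ a 4
    + (sF κ a 2) ^ 2

lemma det_eq (β κ α a : ℝ) (hκ : κ ≠ 0) (hβ : β ≠ 0) (ha : a ≠ 0)
    (hd : 2 * a - β ≠ 0) :
    (GamA β κ α a).det = (1 / (2 * κ)) ^ 3 * (a ^ 2 * GF β κ α a) := by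
  rw [GamA, Matrix.det_smul, Matrix.det_fin_three]
  simp only [Fintype.card_fin, Matrix.cons_val', Matrix.cons_val_zero, Matrix.cons_val_one,
    Matrix.head_cons, Matrix.empty_val', Matrix.cons_val_fin_one, Matrix.head_fin_const,
    Matrix.cons_val_two, Matrix.tail_cons, Matrix.head_fin_const, Matrix.of_apply]
  rw [GF, pF, sF, sF, uFun, vFun]
  field_simp
  ring

lemma slope_lim (c : ℝ) :
    Filter.Tendsto (fun a : ℝ => (1 - Real.exp (c * a)) / a) (nhdsWithin 0 {(0:ℝ)}ᶜ)
      (nhds (-c)) := by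
  have hf : HasDerivAt (fun a : ℝ => 1 - Real.exp (c * a)) (-c) 0 := by
    have h1 : HasDerivAt (fun a : ℝ => c * a) c 0 := by
      simpa using (hasDerivAt_id (0:ℝ)).const_mul c
    have h2 := h1.exp
    simp only [mul_zero, Real.exp_zero, mul_one] at h2
    simpa using h2.const_sub 1
  have := hasDerivAt_iff_tendsto_slope.mp hf
  refine this.congr (fun a => ?_)
  simp [slope, mul_zero, Real.exp_zero]
  ring

theorem stmt15 (β κ α : ℝ) (hκ : 0 < κ) (hβ : β ≠ 0) (hα : α ≠ 1) :
    ∃ a₀ > (0 : ℝ), ∀ a : ℝ, 0 < a → a < a₀ → (GamA β κ α a).det ≠ 0 := by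
  have hκ' : κ ≠ 0 := ne_of_gt hκ
  set l : Filter ℝ := nhdsWithin 0 (Set.Ioi 0) with hl
  have hmono : l ≤ nhdsWithin 0 {(0:ℝ)}ᶜ :=
    nhdsWithin_mono 0 (fun x hx => ne_of_gt hx)
  have hmono' : l ≤ nhds 0 := nhdsWithin_le_nhds
  -- limit of pF
  have hden : Filter.Tendsto (fun a : ℝ => 2 * a - β) (nhds 0) (nhds (-β)) := by
    have : Filter.Tendsto (fun a : ℝ => 2 * a - β) (nhds 0) (nhds (2 * 0 - β)) := by
      exact ((continuous_const.mul continuous_id).sub continuous_const).tendsto 0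
    simpa using this
  have hp : Filter.Tendsto (fun a => pF β κ α a) l (nhds (-2 * α * κ)) := by
    have h1 : Filter.Tendsto (fun a => pF β κ α a) (nhds 0)
        (nhds (2 * α * β * κ / (-β))) := by
      exact Filter.Tendsto.div tendsto_const_nhds hden (neg_ne_zero.mpr hβ)
    have he : 2 * α * β * κ / (-β) = -2 * α * κ := by
      rw [div_eq_iff (neg_ne_zero.mpr hβ)]; ring
    rw [he] at h1
    exact h1.mono_left hmono'
  -- limits of sF
  have hw2 : ∀ a : ℝ, wFun κ a ^ 2 = Real.exp ((-2 * κ) * a) := by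
    intro a
    rw [wFun, ← Real.exp_nat_mul]
    norm_num; ring_nf
  have hw4 : ∀ a : ℝ, wFun κ a ^ 4 = Real.exp ((-4 * κ) * a) := by
    intro a
    rw [wFun, ← Real.exp_nat_mul]
    norm_num; ring_nf
  have hs2 : Filter.Tendsto (fun a => sF κ a 2) l (nhds (2 * κ)) := by
    have := (slope_lim (-2 * κ)).mono_left hmono
    have he : -(-2 * κ) = 2 * κ := by ring
    rw [he] at this
    refine this.congr (fun a => ?_)
    rw [sF, hw2]
  have hs4 : Filter.Tendsto (fun a => sF κ a 4) l (nhds (4 * κ)) := by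
    have := (slope_lim (-4 * κ)).mono_left hmono
    have he : -(-4 * κ) = 4 * κ := by ring
    rw [he] at this
    refine this.congr (fun a => ?_)
    rw [sF, hw4]
  -- limits of the small factors
  have hq1 : Filter.Tendsto (fun a : ℝ => 2 * α * κ / β * a) l (nhds 0) := by
    have : Filter.Tendsto (fun a : ℝ => 2 * α * κ / β * a) (nhds 0)
        (nhds (2 * α * κ / β * 0)) := (continuous_const.mul continuous_id).tendsto 0
    rw [mul_zero] at this
    exact this.mono_left hmono'
  have hq2 : Filter.Tendsto (fun a : ℝ => 2 * α * κ / β * a ^ 2) l (nhds 0) := by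
    have : Filter.Tendsto (fun a : ℝ => 2 * α * κ / β * a ^ 2) (nhds 0)
        (nhds (2 * α * κ / β * 0 ^ 2)) :=
      (continuous_const.mul (continuous_id.pow 2)).tendsto 0
    norm_num at this
    exact this.mono_left hmono'
  -- limit of GF
  have hG : Filter.Tendsto (fun a => GF β κ α a) l
      (nhds (2 * (-2 * α * κ) * (2 * κ) + (-2 * α * κ) ^ 2
        + 2 * (-2 * α * κ) * 0 + (-2 * α * κ) ^ 2 * 0 + 0 * (4 * κ) + (2 * κ) ^ 2)) := by
    exact ((((((hp.const_mul 2).mul hs2).add (hp.pow 2)).add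
      ((hp.const_mul 2).mul hq1)).add ((hp.pow 2).mul hq2)).add
      (hq1.mul hs4)).add (hs2.pow 2)
  have hLne : (2 * (-2 * α * κ) * (2 * κ) + (-2 * α * κ) ^ 2
      + 2 * (-2 * α * κ) * 0 + (-2 * α * κ) ^ 2 * 0 + 0 * (4 * κ) + (2 * κ) ^ 2) ≠ 0 := by
    have he : (2 * (-2 * α * κ) * (2 * κ) + (-2 * α * κ) ^ 2
        + 2 * (-2 * α * κ) * 0 + (-2 * α * κ) ^ 2 * 0 + 0 * (4 * κ) + (2 * κ) ^ 2)
        = (2 * κ * (1 - α)) ^ 2 := by ring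
    rw [he]
    have h1α : (1 : ℝ) - α ≠ 0 := sub_ne_zero.mpr (Ne.symm hα)
    positivity
  have hGne : ∀ᶠ a in l, GF β κ α a ≠ 0 := hG.eventually_ne hLne
  have hdne : ∀ᶠ a in l, 2 * a - β ≠ 0 :=
    (hden.mono_left hmono').eventually_ne (neg_ne_zero.mpr hβ)
  have hcomb : ∀ᶠ a in l, GF β κ α a ≠ 0 ∧ 2 * a - β ≠ 0 := hGne.and hdne
  rw [hl, eventually_nhdsWithin_iff, Metric.eventually_nhds_iff] at hcomb
  obtain ⟨ε, hε, hball⟩ := hcomb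
  refine ⟨ε, hε, fun a ha0 haε => ?_⟩
  have hmem : dist a 0 < ε := by
    rw [Real.dist_eq, sub_zero, abs_of_pos ha0]; exact haε
  obtain ⟨hGa, hda⟩ := hball hmem ha0
  rw [det_eq β κ α a hκ' hβ (ne_of_gt ha0) hda]
  refine mul_ne_zero (pow_ne_zero 3 ?_) (mul_ne_zero (pow_ne_zero 2 (ne_of_gt ha0)) hGa)
  simp [hκ']
end
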